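/- A cyclic permutation (an n-cycle) π ∈ S_n avoids 321 if and only if dp(π) = ℓ_S(π) and ℓ_T(π) = n − 1. -/

import Mathlib

/-!
Let `c i = #{j | i < j ∧ π j < π i}` be the Lehmer code, so that `ℓ_S(π) = ∑ c i`. Of the `π i`
positions carrying a value below `π i`, at most `i` lie left of `i`, so `π i - i ≤ c i`; the
inequality is strict exactly when some larger value lies left of `i` and some smaller value right
of it, i.e. when `i` is the middle of a 321 pattern. Hence `dp(π) = ℓ_S(π)` iff `π` avoids 321.

An `n`-cycle is the product of `n - 1` transpositions (`List.formPerm`). Conversely, if `k`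
transpositions multiply to an `n`-cycle, the graph having them as edges joins every point to its
image, so it is connected and `n ≤ k + 1`.
-/

/-- The depth of a permutation. -/
def permDepth {n : ℕ} (π : Equiv.Perm (Fin n)) : ℕ :=
  ∑ i ∈ Finset.univ.filter (fun i : Fin n => (i : ℕ) < (π i : ℕ)), ((π i : ℕ) - (i : ℕ))

/-- The inversion number of a permutation. -/
def permInv {n : ℕ} (π : Equiv.Perm (Fin n)) : ℕ :=
  (Finset.univ.filter (fun p : Fin n × Fin n => p.1 < p.2 ∧ π p.2 < π p.1)).card

/-- Reflection length: minimal number of transpositions with product `π`. -/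
noncomputable def reflLength {n : ℕ} (π : Equiv.Perm (Fin n)) : ℕ :=
  sInf {k : ℕ | ∃ l : List (Equiv.Perm (Fin n)),
    l.length = k ∧ (∀ τ ∈ l, τ.IsSwap) ∧ l.prod = π}

/-- `π` avoids the pattern 321. -/
def Avoids321 {n : ℕ} (π : Equiv.Perm (Fin n)) : Prop :=
  ¬ ∃ i j k : Fin n, i < j ∧ j < k ∧ π k < π j ∧ π j < π i

/-- `π` is cyclic: its cycle decomposition consists of a single n-cycle,
i.e. all points lie on one cycle. -/
def IsCyclicPerm {n : ℕ} (π : Equiv.Perm (Fin n)) : Prop :=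
  ∀ x y : Fin n, π.SameCycle x y

open Finset Equiv

section Transpositions

variable {α : Type*} [DecidableEq α]

lemma exists_isSwap_list_prod_eq_formPerm :
    ∀ l : List α, l.Nodup → ∃ s : List (Perm α),
      s.length = l.length - 1 ∧ (∀ τ ∈ s, τ.IsSwap) ∧ s.prod = l.formPerm
  | [], _ => ⟨[], rfl, by simp, rfl⟩
  | [_], _ => ⟨[], rfl, by simp, by simp⟩
  | x :: y :: l, hl => by
    obtain ⟨s, hlen, hswap, hprod⟩ := exists_isSwap_list_prod_eq_formPerm (y :: l) hl.of_cons
    refine ⟨swap x y :: s, by simp [hlen], ?_, by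
      rw [List.prod_cons, hprod, List.formPerm_cons_cons]⟩
    rintro τ (_ | ⟨_, hτ⟩)
    · exact ⟨x, y, fun h => (List.nodup_cons.1 hl).1 (h ▸ List.mem_cons_self), rfl⟩
    · exact hswap τ hτ

lemma Equiv.Perm.IsSwap.sym2_eq {τ : Perm α} (hτ : τ.IsSwap) {x y : α} (hx : τ x ≠ x)
    (hy : τ y ≠ y) : s(x, τ x) = s(y, τ y) := by
  obtain ⟨a, b, -, rfl⟩ := hτ
  simp only [swap_apply_def] at *
  split_ifs at * <;> simp_all [Sym2.eq_swap]

lemma reachable_list_prod_apply {G : SimpleGraph α} {l : List (Perm α)}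
    (hl : ∀ τ ∈ l, ∀ x, τ x ≠ x → G.Adj x (τ x)) (x : α) : G.Reachable x (l.prod x) := by
  induction l with
  | nil => rfl
  | cons τ l ih =>
    have hτ : G.Reachable (l.prod x) (τ (l.prod x)) := by
      by_cases h : τ (l.prod x) = l.prod x
      · rw [h]
      · exact (hl τ List.mem_cons_self _ h).reachable
    exact (ih fun σ hσ => hl σ (List.mem_cons_of_mem τ hσ)).trans hτ

variable [Fintype α]

lemma exists_isSwap_list_prod_eq_cycleOf (π : Perm α) (x : α) : ∃ s : List (Perm α),
    s.length = #(π.cycleOf x).support - 1 ∧ (∀ τ ∈ s, τ.IsSwap) ∧ s.prod = π.cycleOf x := by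
  rw [← Perm.length_toList, ← Perm.formPerm_toList]
  exact exists_isSwap_list_prod_eq_formPerm _ (π.nodup_toList x)

def swapEdges (l : List (Perm α)) : Finset (Sym2 α) :=
  l.toFinset.biUnion fun τ => τ.support.image fun x => s(x, τ x)

lemma card_swapEdges_le {l : List (Perm α)} (hl : ∀ τ ∈ l, τ.IsSwap) :
    #(swapEdges l) ≤ l.length := calc
  #(swapEdges l) ≤ ∑ τ ∈ l.toFinset, 1 := by
    refine card_biUnion_le.trans (sum_le_sum fun τ hτ => card_le_one.2 ?_)
    simp only [mem_image, Perm.mem_support]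
    rintro _ ⟨x, hx, rfl⟩ _ ⟨y, hy, rfl⟩
    exact (hl τ (List.mem_toFinset.1 hτ)).sym2_eq hx hy
  _ ≤ l.length := by simpa using l.toFinset_card_le

theorem card_le_length_add_one_of_sameCycle {l : List (Perm α)} (hl : ∀ τ ∈ l, τ.IsSwap)
    (hcyc : ∀ x y, l.prod.SameCycle x y) : Fintype.card α ≤ l.length + 1 := by
  cases isEmpty_or_nonempty α
  · simp
  set G := SimpleGraph.fromEdgeSet (swapEdges l : Set (Sym2 α))
  have hadj : ∀ τ ∈ l, ∀ x, τ x ≠ x → G.Adj x (τ x) := fun τ hτ x hx => by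
    simp only [G, SimpleGraph.fromEdgeSet_adj, swapEdges, mem_coe, mem_biUnion, mem_image,
      List.mem_toFinset, Perm.mem_support]
    exact ⟨⟨τ, hτ, x, hx, rfl⟩, hx.symm⟩
  have hconn : G.Connected := by
    refine ⟨fun x y => ?_⟩
    obtain ⟨k, -, rfl⟩ := (hcyc x y).exists_pow_eq'
    induction k with
    | zero => rfl
    | succ k ih =>
      rw [pow_succ', Perm.mul_apply]
      exact ih.trans (reachable_list_prod_apply hadj _)
  have hedges : Nat.card G.edgeSet ≤ #(swapEdges l) := by
    rw [SimpleGraph.edgeSet_fromEdgeSet, Nat.card_coe_set_eq, ← Set.ncard_coe_finset]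
    exact Set.ncard_le_ncard Set.sdiff_subset
  have := hconn.card_vert_le_card_edgeSet_add_one
  rw [Nat.card_eq_fintype_card] at this
  have := card_swapEdges_le hl
  omega

end Transpositions

section PermOfFin

variable {n : ℕ}

def lehmerCode (π : Perm (Fin n)) (i : Fin n) : ℕ := #{j | i < j ∧ π j < π i}

def lowerLeftCount (π : Perm (Fin n)) (i : Fin n) : ℕ := #{j | j < i ∧ π j < π i}

lemma card_apply_lt (π : Perm (Fin n)) (i : Fin n) : #{j | π j < π i} = π i := by
  rw [← Fin.card_Iio]
  exact card_equiv π fun j => by simp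

lemma lehmerCode_add_lowerLeftCount (π : Perm (Fin n)) (i : Fin n) :
    lehmerCode π i + lowerLeftCount π i = π i := by
  rw [lehmerCode, lowerLeftCount, ← card_union_of_disjoint, ← card_apply_lt π i]
  · congr 1
    ext j
    simp only [mem_union, mem_filter, mem_univ, true_and]
    constructor
    · rintro (⟨-, h⟩ | ⟨-, h⟩) <;> exact h
    · intro h
      rcases lt_trichotomy i j with hij | rfl | hji
      exacts [.inl ⟨hij, h⟩, absurd h (lt_irrefl _), .inr ⟨hji, h⟩]
  · exact disjoint_filter.2 fun j _ h h' => lt_asymm h.1 h'.1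

lemma lowerLeftCount_le (π : Perm (Fin n)) (i : Fin n) : lowerLeftCount π i ≤ i := by
  rw [← Fin.card_Iio, lowerLeftCount]
  exact card_le_card fun j hj => by simpa using (mem_filter.1 hj).2.1

lemma lowerLeftCount_lt_iff (π : Perm (Fin n)) (i : Fin n) :
    lowerLeftCount π i < i ↔ ∃ j < i, π i < π j := by
  have : lowerLeftCount π i = #{j ∈ Iio i | π j < π i} := by
    rw [lowerLeftCount]; congr 1; ext; simp
  rw [this, ← Fin.card_Iio, lt_iff_le_and_ne, Ne, card_filter_eq_iff]
  simp only [card_filter_le, true_and, mem_Iio, not_forall, not_lt, exists_prop]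
  exact exists_congr fun j => and_congr_right fun hj =>
    ⟨fun h => h.lt_of_ne fun he => hj.ne (π.injective he).symm, le_of_lt⟩

lemma lehmerCode_pos_iff (π : Perm (Fin n)) (i : Fin n) :
    0 < lehmerCode π i ↔ ∃ k, i < k ∧ π k < π i := by
  simp [lehmerCode, card_pos, Finset.Nonempty]

lemma sub_le_lehmerCode (π : Perm (Fin n)) (i : Fin n) : (π i : ℕ) - i ≤ lehmerCode π i := by
  have := lehmerCode_add_lowerLeftCount π i
  have := lowerLeftCount_le π i
  omega

lemma sub_lt_lehmerCode_iff (π : Perm (Fin n)) (i : Fin n) :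
    (π i : ℕ) - i < lehmerCode π i ↔
      (∃ j < i, π i < π j) ∧ ∃ k, i < k ∧ π k < π i := by
  rw [← lowerLeftCount_lt_iff, ← lehmerCode_pos_iff]
  have := lehmerCode_add_lowerLeftCount π i
  have := lowerLeftCount_le π i
  omega

lemma avoids321_iff_forall_lehmerCode_le (π : Perm (Fin n)) :
    Avoids321 π ↔ ∀ i, lehmerCode π i ≤ (π i : ℕ) - i := by
  simp only [← not_lt, sub_lt_lehmerCode_iff, Avoids321]
  constructor
  · rintro h i ⟨⟨j, hji, hj⟩, k, hik, hk⟩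
    exact h ⟨j, i, k, hji, hik, hk, hj⟩
  · rintro h ⟨i, j, k, hij, hjk, hk, hj⟩
    exact h j ⟨⟨i, hij, hj⟩, k, hjk, hk⟩

lemma permInv_eq_sum_lehmerCode (π : Perm (Fin n)) : permInv π = ∑ i, lehmerCode π i := by
  simp only [permInv, lehmerCode, card_filter, Fintype.sum_prod_type]

lemma permDepth_eq_sum_sub (π : Perm (Fin n)) : permDepth π = ∑ i, ((π i : ℕ) - i) :=
  sum_subset (filter_subset _ _) fun i _ hi => by simp_all

theorem avoids321_iff_permDepth_eq_permInv (π : Perm (Fin n)) :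
    Avoids321 π ↔ permDepth π = permInv π := by
  rw [avoids321_iff_forall_lehmerCode_le, permDepth_eq_sum_sub, permInv_eq_sum_lehmerCode,
    sum_eq_sum_iff_of_le fun i _ => sub_le_lehmerCode π i]
  simp only [mem_univ, true_implies]
  exact forall_congr' fun i => ⟨(sub_le_lehmerCode π i).antisymm, Eq.ge⟩

lemma IsCyclicPerm.cycleOf_eq {π : Perm (Fin n)} (hcyc : IsCyclicPerm π) (x : Fin n) :
    π.cycleOf x = π := by
  ext y
  simp [Perm.cycleOf_apply, hcyc x y]

lemma IsCyclicPerm.exists_isSwap_list_prod_eq {π : Perm (Fin n)} (hcyc : IsCyclicPerm π) :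
    ∃ s : List (Perm (Fin n)), s.length ≤ n - 1 ∧ (∀ τ ∈ s, τ.IsSwap) ∧ s.prod = π := by
  rcases n.eq_zero_or_pos with rfl | hn
  · exact ⟨[], le_rfl, by simp, Subsingleton.elim _ _⟩
  obtain ⟨s, hlen, hswap, hprod⟩ := exists_isSwap_list_prod_eq_cycleOf π ⟨0, hn⟩
  rw [hcyc.cycleOf_eq] at hlen hprod
  refine ⟨s, hlen.trans_le ?_, hswap, hprod⟩
  simpa using Nat.sub_le_sub_right (card_le_univ π.support) 1

lemma reflLength_eq_of_isCyclicPerm {π : Perm (Fin n)} (hcyc : IsCyclicPerm π) :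
    reflLength π = n - 1 := by
  obtain ⟨s, hlen, hswap, hprod⟩ := hcyc.exists_isSwap_list_prod_eq
  have hmem : s.length ∈ {k | ∃ l : List (Perm (Fin n)),
      l.length = k ∧ (∀ τ ∈ l, τ.IsSwap) ∧ l.prod = π} := ⟨s, rfl, hswap, hprod⟩
  refine le_antisymm ((Nat.sInf_le hmem).trans hlen) ?_
  obtain ⟨l, hl, hlswap, rfl⟩ := Nat.sInf_mem ⟨_, hmem⟩
  have := card_le_length_add_one_of_sameCycle hlswap hcyc
  rw [Fintype.card_fin] at this
  rw [reflLength, ← hl]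
  omega

end PermOfFin

/-- A cyclic permutation avoids 321 iff dp(π) = ℓ_S(π) and ℓ_T(π) = n − 1. -/
theorem cyclic_avoids321_iff (n : ℕ) (π : Equiv.Perm (Fin n))
    (hcyc : IsCyclicPerm π) :
    Avoids321 π ↔ (permDepth π = permInv π ∧ reflLength π = n - 1) := by
  simp [reflLength_eq_of_isCyclicPerm hcyc, avoids321_iff_permDepth_eq_permInv]
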